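/- arXiv:2310.03153 — 3 statements merged into one kernel-verified Lean document; each statement's English description precedes it below -/
import Mathlib

section
/- Let $\Cat_\Ring$ be an $\Ring$-linear abelian category in which every object $N$ is separated in the $\mathfrak{m}$-adic topology (i.e. $N \hookrightarrow \varprojlim N/\mathfrak{m}^k N$), where $\mathfrak{m}$ is the maximal ideal of the complete local ring $\Ring = \mathbb{C}[[x_1,\ldots,x_k]]$. Then for $M \in D^-(\Cat_\Ring)$, $M$ lies in $D^b(\Cat_\Ring)$ if and only if $\mathbb{C} \otimes^L_\Ring M$ lies in $D^b(\Cat)$, where $\Cat$ is the full subcategory of objects killed by $\mathfrak{m}$. -/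
/-!
Write `R = ℂ⟦X₁, …, X_k⟧`. If `M` is exact in low degrees, reduce it modulo `X₁, …, X_k` one
variable at a time: `X_q` is a nonzerodivisor on `R ⧸ (X_p : p ∈ S)` for `q ∉ S`, hence, `M` being
flat, on `M ⧸ (X_p : p ∈ S) M`, and the long exact sequence of multiplication by `X_q` costs one
degree of exactness per variable.

Conversely, write a cycle `z ∈ 𝔪ʲ M` as `∑ₑ Xᵉ • nₑ` over the monomials of degree `j`. The
relation `∑ₑ Xᵉ • d nₑ = 0` is trivial by flatness (equational criterion), and all syzygies of
the degree-`j` monomials have coefficients in `𝔪`, so `d nₑ ∈ 𝔪 M`. Exactness of `M ⧸ 𝔪 M` then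
moves `z` modulo boundaries into `𝔪ʲ⁺¹ M`. Thus the class of `z` in `M ⧸ im d` lies in
`⋂ⱼ 𝔪ʲ (M ⧸ im d) = 0`.
-/

theorem Submodule.exists_sum_smul_eq_of_mem_span_smul_top {R N ι : Type*} [CommRing R]
    [AddCommGroup N] [Module R N] [Fintype ι] (f : ι → R) {z : N}
    (hz : z ∈ Ideal.span (Set.range f) • (⊤ : Submodule R N)) :
    ∃ n : ι → N, ∑ i, f i • n i = z := by
  refine Submodule.smul_induction_on hz (fun r hr w _ => ?_) ?_
  · obtain ⟨c, rfl⟩ := Ideal.mem_span_range_iff_exists_fun.1 hr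
    exact ⟨fun i => c i • w, by simp only [smul_smul, Finset.sum_smul, mul_comm]⟩
  · rintro _ _ ⟨n, rfl⟩ ⟨n', rfl⟩
    exact ⟨n + n', by simp only [Pi.add_apply, smul_add, Finset.sum_add_distrib]⟩

namespace Module.Flat

variable {R N : Type*} [CommRing R] [AddCommGroup N] [Module R N] [Module.Flat R N]

theorem mem_smul_top_of_sum_smul_eq_zero {ι : Type*} [Fintype ι] {I : Ideal R} {f : ι → R}
    {x : ι → N} (hfx : ∑ i, f i • x i = 0) {i₀ : ι}
    (hI : ∀ a : ι → R, ∑ i, f i * a i = 0 → a i₀ ∈ I) : x i₀ ∈ I • (⊤ : Submodule R N) := by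
  obtain ⟨κ, a, y, hxa, hfa⟩ := isTrivialRelation_of_sum_smul_eq_zero hfx
  rw [hxa i₀]
  exact Submodule.sum_mem _ fun s _ => Submodule.smul_mem_smul (hI _ (hfa s)) Submodule.mem_top

theorem mem_smul_top_of_smul_mem {I : Ideal R} {r : R} (hr : ∀ a, r * a ∈ I → a ∈ I) {u : N}
    (hu : r • u ∈ I • (⊤ : Submodule R N)) : u ∈ I • (⊤ : Submodule R N) := by
  rw [← Submodule.span_univ, ← Set.range_id, Submodule.mem_ideal_smul_span_iff_exists_sum] at hu
  obtain ⟨c, hcI, hc⟩ := hu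
  let f : Option c.support → R := fun t => t.elim r fun v => -c v
  let x : Option c.support → N := fun t => t.elim u Subtype.val
  have hfx : ∑ t, f t • x t = 0 := by
    simp only [Fintype.sum_option, Option.elim, f, x, neg_smul, Finset.sum_neg_distrib]
    rw [← hc, Finsupp.sum, ← Finset.sum_coe_sort, add_neg_eq_zero]
    rfl
  refine mem_smul_top_of_sum_smul_eq_zero hfx (i₀ := none) fun a ha => hr _ ?_
  simp only [Fintype.sum_option, Option.elim, f, neg_mul, Finset.sum_neg_distrib,
    add_neg_eq_zero] at ha
  rw [ha]
  exact Submodule.sum_mem _ fun t _ => I.mul_mem_right _ (hcI t)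

end Module.Flat

namespace MvPowerSeries

variable {σ R : Type*} [CommRing R]

/-- The ideal `(X q : q ∈ S)`, described by coefficients: no monomial avoiding `S` occurs
(see `varIdeal_eq_span`). -/
def varIdeal (S : Finset σ) : Ideal (MvPowerSeries σ R) where
  carrier := {f | ∀ e : σ →₀ ℕ, (∀ q ∈ S, e q = 0) → coeff e f = 0}
  add_mem' ha hb e he := by rw [map_add, ha e he, hb e he, add_zero]
  zero_mem' e _ := map_zero _
  smul_mem' c f hf e he := by
    classical
    rw [smul_eq_mul, coeff_mul]
    refine Finset.sum_eq_zero fun p hp => ?_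
    rw [Finset.HasAntidiagonal.mem_antidiagonal] at hp
    rw [hf p.2 fun q hq => ?_, mul_zero]
    have := he q hq
    rw [← hp, Finsupp.add_apply] at this
    omega

theorem mem_varIdeal {S : Finset σ} {f : MvPowerSeries σ R} :
    f ∈ varIdeal S ↔ ∀ e : σ →₀ ℕ, (∀ q ∈ S, e q = 0) → coeff e f = 0 :=
  Iff.rfl

theorem X_mem_varIdeal {S : Finset σ} {p : σ} (hp : p ∈ S) :
    (X p : MvPowerSeries σ R) ∈ varIdeal S := by
  classical
  intro e he
  rw [coeff_X, if_neg]
  rintro rfl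
  simpa using he p hp

theorem varIdeal_empty : varIdeal (∅ : Finset σ) = (⊥ : Ideal (MvPowerSeries σ R)) := by
  ext f
  simp only [mem_varIdeal, Finset.notMem_empty, IsEmpty.forall_iff, implies_true, forall_const,
    Submodule.mem_bot]
  exact ⟨fun h => ext h, fun h e => by rw [h, map_zero]⟩

theorem varIdeal_insert [DecidableEq σ] (p : σ) (S : Finset σ) :
    varIdeal (insert p S) = varIdeal S ⊔ Ideal.span {(X p : MvPowerSeries σ R)} := by
  refine le_antisymm (fun f hf => ?_) (sup_le (fun f hf e he => hf e fun q hq => he q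
    (Finset.mem_insert_of_mem hq)) ((Ideal.span_singleton_le_iff_mem _).2
      (X_mem_varIdeal (Finset.mem_insert_self p S))))
  let g : MvPowerSeries σ R := fun e => coeff (e + Finsupp.single p 1) f
  let h : MvPowerSeries σ R := fun e => if e p = 0 then coeff e f else 0
  have hg (e) : coeff e g = coeff (e + Finsupp.single p 1) f := rfl
  have hh (e) : coeff e h = if e p = 0 then coeff e f else 0 := rfl
  have hsplit : f = h + X p * g := by
    ext e
    rw [map_add, X_def, coeff_monomial_mul, hh]
    by_cases hep : e p = 0
    · have : ¬ Finsupp.single p 1 ≤ e := by rw [Finsupp.single_le_iff]; omega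
      simp [hep, this]
    · have : Finsupp.single p 1 ≤ e := by rw [Finsupp.single_le_iff]; omega
      simp [hg, hep, this, tsub_add_cancel_of_le this]
  rw [hsplit]
  refine add_mem (Ideal.mem_sup_left fun e he => ?_)
    (Ideal.mem_sup_right (Ideal.mem_span_singleton'.2 ⟨g, mul_comm _ _⟩))
  rw [hh]
  split_ifs with hep
  · exact hf e fun q hq => (Finset.mem_insert.1 hq).elim (· ▸ hep) (he q)
  · rfl

theorem varIdeal_eq_span (S : Finset σ) :
    varIdeal S = Ideal.span ((X : σ → MvPowerSeries σ R) '' S) := by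
  classical
  induction S using Finset.induction_on with
  | empty => simp [varIdeal_empty]
  | insert p S _ ih =>
    rw [varIdeal_insert, ih, Finset.coe_insert, Set.image_insert_eq, Ideal.span_insert, sup_comm]

theorem mem_varIdeal_of_X_mul_mem {S : Finset σ} {q : σ} (hq : q ∉ S) {f : MvPowerSeries σ R}
    (hf : X q * f ∈ varIdeal S) : f ∈ varIdeal S := by
  intro e he
  have hqe : ∀ q' ∈ S, (e + Finsupp.single q 1 : σ →₀ ℕ) q' = 0 := fun q' hq' => by
    rw [Finsupp.add_apply, he q' hq', Finsupp.single_eq_of_ne (ne_of_mem_of_not_mem hq' hq),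
      add_zero]
  simpa [X_def, coeff_monomial_mul] using hf _ hqe

theorem eq_zero_of_sum_monomial_mul_eq_zero {ι : Type*} [Fintype ι] {e : ι → σ →₀ ℕ}
    (he : Function.Injective e) {j : ℕ} (hdeg : ∀ i, (e i).degree = j)
    {a : ι → MvPowerSeries σ R} (h : ∑ i, monomial (e i) 1 * a i = 0) (i₀ : ι) :
    constantCoeff (a i₀) = 0 := by
  classical
  have h₀ := congrArg (coeff (e i₀)) h
  rw [map_sum, map_zero, Finset.sum_eq_single_of_mem i₀ (Finset.mem_univ _)] at h₀
  · simpa [coeff_monomial_mul] using h₀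
  intro i _ hi
  rw [coeff_monomial_mul, if_neg]
  intro hle
  have : (e i₀ - e i).degree = 0 := by
    have := congrArg Finsupp.degree (tsub_add_cancel_of_le hle)
    rw [map_add, hdeg, hdeg] at this
    omega
  rw [Finsupp.degree_eq_zero_iff, tsub_eq_zero_iff_le] at this
  exact hi (he (le_antisymm hle this))

section Field

variable {K : Type*} [Field K]

open IsLocalRing

theorem mem_maximalIdeal_iff {f : MvPowerSeries σ K} :
    f ∈ maximalIdeal (MvPowerSeries σ K) ↔ constantCoeff f = 0 := by
  rw [mem_maximalIdeal, mem_nonunits_iff, isUnit_iff_constantCoeff, isUnit_iff_ne_zero, not_not]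

theorem varIdeal_univ [Fintype σ] :
    varIdeal Finset.univ = maximalIdeal (MvPowerSeries σ K) := by
  ext f
  rw [mem_maximalIdeal_iff, ← coeff_zero_eq_constantCoeff_apply]
  refine ⟨fun h => h 0 fun _ _ => rfl, fun h e he => ?_⟩
  obtain rfl : e = 0 := Finsupp.ext fun q => he q (Finset.mem_univ q)
  exact h

theorem maximalIdeal_eq_span_X [Fintype σ] :
    maximalIdeal (MvPowerSeries σ K) = Ideal.span (Set.range X) := by
  rw [← varIdeal_univ, varIdeal_eq_span, Finset.coe_univ, Set.image_univ]

theorem monomial_mem_maximalIdeal_pow (e : σ →₀ ℕ) :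
    monomial e (1 : K) ∈ maximalIdeal (MvPowerSeries σ K) ^ e.degree := by
  induction e using Finsupp.induction with
  | zero => simp [monomial_zero_one]
  | single_add q b f _ _ ih =>
    rw [map_add, Finsupp.degree_single, pow_add, ← one_mul (1 : K), ← monomial_mul_monomial,
      ← X_pow_eq]
    exact Ideal.mul_mem_mul (Ideal.pow_mem_pow (mem_maximalIdeal_iff.2 (constantCoeff_X q)) b) ih

noncomputable instance [Finite σ] (j : ℕ) : Fintype {e : σ →₀ ℕ // e.degree = j} :=
  have : Finite {e : σ →₀ ℕ // e.degree = j} := (Finsupp.finite_of_degree_eq j).to_subtype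
  Fintype.ofFinite _

theorem maximalIdeal_pow_le_span_monomial [Fintype σ] (j : ℕ) :
    maximalIdeal (MvPowerSeries σ K) ^ j ≤
      Ideal.span (Set.range fun e : {e : σ →₀ ℕ // e.degree = j} => monomial e.1 (1 : K)) := by
  induction j with
  | zero =>
    rw [pow_zero, Ideal.one_eq_top, top_le_iff, Ideal.eq_top_iff_one]
    exact Ideal.subset_span ⟨⟨0, map_zero _⟩, monomial_zero_one⟩
  | succ j ih =>
    rw [pow_succ]
    refine (Ideal.mul_mono ih maximalIdeal_eq_span_X.le).trans ?_
    rw [Ideal.span_mul_span']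
    refine Ideal.span_mono ?_
    rintro _ ⟨_, ⟨e, rfl⟩, _, ⟨q, rfl⟩, rfl⟩
    have he : (e.1 + Finsupp.single q 1).degree = j + 1 := by
      rw [map_add, e.2, Finsupp.degree_single]
    refine ⟨⟨_, he⟩, ?_⟩
    simp only [X_def, monomial_mul_monomial, one_mul]

end Field

end MvPowerSeries

open MvPowerSeries

section Complex

variable {R : Type*} [CommRing R] {M : ℤ → Type*} [∀ i, AddCommGroup (M i)]
  [∀ i, Module R (M i)]

/-- The reduction `M ⊗ R/I` of the complex `(M, d)` is exact at every spot `i + 1` with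
`i ≤ n`: `y + I • M` is a cycle there iff `d y ∈ I • M`, and a boundary iff `y - d x ∈ I • M`
for some `x`. -/
def ExactModBelow (d : ∀ i, M i →ₗ[R] M (i + 1)) (I : Ideal R) (n : ℤ) : Prop :=
  ∀ i ≤ n, ∀ y : M (i + 1), d (i + 1) y ∈ I • (⊤ : Submodule R (M (i + 1 + 1))) →
    ∃ x : M i, y - d i x ∈ I • (⊤ : Submodule R (M (i + 1)))

variable {d : ∀ i, M i →ₗ[R] M (i + 1)}

theorem exactModBelow_bot_iff {n : ℤ} :
    ExactModBelow d ⊥ n ↔ ∀ i ≤ n, ∀ y : M (i + 1), d (i + 1) y = 0 → ∃ x, d i x = y := by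
  simp only [ExactModBelow, Submodule.bot_smul, Submodule.mem_bot, sub_eq_zero]
  exact forall₂_congr fun _ _ => forall₂_congr fun _ _ => exists_congr fun _ => eq_comm

theorem ExactModBelow.sup_span_singleton [∀ i, Module.Flat R (M i)]
    (hdd : ∀ i x, d (i + 1) (d i x) = 0) {I : Ideal R} {r : R} (hr : ∀ a, r * a ∈ I → a ∈ I)
    {n : ℤ} (h : ExactModBelow d I n) : ExactModBelow d (I ⊔ Ideal.span {r}) (n - 1) := by
  intro i hi y hy
  simp only [Submodule.sup_smul, Submodule.ideal_span_singleton_smul] at hy ⊢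
  obtain ⟨a, ha, _, hu, hau⟩ := Submodule.mem_sup.1 hy
  obtain ⟨u, -, rfl⟩ := (Submodule.mem_smul_pointwise_iff_exists _ _ _).1 hu
  have hdu : d (i + 1 + 1) u ∈ I • (⊤ : Submodule R _) := by
    refine Module.Flat.mem_smul_top_of_smul_mem hr ?_
    have : r • d (i + 1 + 1) u = -d (i + 1 + 1) a := by
      rw [← map_smul, eq_neg_iff_add_eq_zero, ← map_add, add_comm (r • u), hau, hdd]
    rw [this]
    exact neg_mem (Submodule.smul_top_le_comap_smul_top I _ ha)
  obtain ⟨x₁, hx₁⟩ := h (i + 1) (by omega) u hdu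
  have hy₁ : d (i + 1) (y - r • x₁) ∈ I • (⊤ : Submodule R _) := by
    have : d (i + 1) (y - r • x₁) = a + r • (u - d (i + 1) x₁) := by
      rw [map_sub, map_smul, ← hau, smul_sub]
      abel
    rw [this]
    exact add_mem ha (Submodule.smul_mem _ r hx₁)
  obtain ⟨x, hx⟩ := h i (by omega) _ hy₁
  refine ⟨x, ?_⟩
  rw [show y - d i x = (y - r • x₁ - d i x) + r • x₁ by abel]
  exact add_mem (Submodule.mem_sup_left hx)
    (Submodule.mem_sup_right (Submodule.smul_mem_pointwise_smul x₁ r ⊤ trivial))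

end Complex

theorem ExactModBelow.varIdeal {σ R : Type*} [CommRing R] {M : ℤ → Type*}
    [∀ i, AddCommGroup (M i)] [∀ i, Module (MvPowerSeries σ R) (M i)]
    [∀ i, Module.Flat (MvPowerSeries σ R) (M i)] {d : ∀ i, M i →ₗ[MvPowerSeries σ R] M (i + 1)}
    (hdd : ∀ i x, d (i + 1) (d i x) = 0) {n : ℤ} (h : ExactModBelow d ⊥ n) (S : Finset σ) :
    ExactModBelow d (varIdeal S) (n - S.card) := by
  classical
  induction S using Finset.induction_on with
  | empty => simpa [varIdeal_empty] using h
  | insert p S hp ih =>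
    rw [varIdeal_insert, Finset.card_insert_of_notMem hp, Nat.cast_succ, ← sub_sub]
    exact ih.sup_span_singleton hdd fun _ => mem_varIdeal_of_X_mul_mem hp

section Reduction

open IsLocalRing

variable {σ K : Type*} [Fintype σ] [Field K] {N₁ N₂ N₃ : Type*}
  [AddCommGroup N₁] [Module (MvPowerSeries σ K) N₁]
  [AddCommGroup N₂] [Module (MvPowerSeries σ K) N₂]
  [AddCommGroup N₃] [Module (MvPowerSeries σ K) N₃] [Module.Flat (MvPowerSeries σ K) N₃]
  (d₁ : N₁ →ₗ[MvPowerSeries σ K] N₂) (d₂ : N₂ →ₗ[MvPowerSeries σ K] N₃)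

local notation "𝔪" => maximalIdeal (MvPowerSeries σ K)

theorem exists_sub_mem_maximalIdeal_pow_succ
    (hred : ∀ y, d₂ y ∈ 𝔪 • (⊤ : Submodule (MvPowerSeries σ K) N₃) →
      ∃ x, y - d₁ x ∈ 𝔪 • (⊤ : Submodule (MvPowerSeries σ K) N₂))
    {j : ℕ} {z : N₂} (hz : z ∈ 𝔪 ^ j • (⊤ : Submodule (MvPowerSeries σ K) N₂)) (hzc : d₂ z = 0) :
    ∃ x, z - d₁ x ∈ 𝔪 ^ (j + 1) • (⊤ : Submodule (MvPowerSeries σ K) N₂) := by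
  have hz' := Submodule.smul_mono_left (maximalIdeal_pow_le_span_monomial (K := K) j) hz
  obtain ⟨n, rfl⟩ := Submodule.exists_sum_smul_eq_of_mem_span_smul_top _ hz'
  have hrel : ∑ e, monomial e.1 (1 : K) • d₂ (n e) = 0 := by
    simpa only [map_sum, map_smul] using hzc
  have hdn (e) : d₂ (n e) ∈ 𝔪 • (⊤ : Submodule (MvPowerSeries σ K) N₃) :=
    Module.Flat.mem_smul_top_of_sum_smul_eq_zero hrel fun _ ha => mem_maximalIdeal_iff.2
      (eq_zero_of_sum_monomial_mul_eq_zero Subtype.val_injective Subtype.prop ha e)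
  choose x hx using fun e => hred _ (hdn e)
  refine ⟨∑ e, monomial e.1 (1 : K) • x e, ?_⟩
  rw [map_sum, ← Finset.sum_sub_distrib, pow_succ, Submodule.mul_smul]
  refine Submodule.sum_mem _ fun e _ => ?_
  rw [map_smul, ← smul_sub]
  have hmon := monomial_mem_maximalIdeal_pow (K := K) e.1
  rw [e.2] at hmon
  exact Submodule.smul_mem_smul hmon (hx e)

theorem exists_sub_mem_maximalIdeal_pow (hdd : ∀ x, d₂ (d₁ x) = 0)
    (hred : ∀ y, d₂ y ∈ 𝔪 • (⊤ : Submodule (MvPowerSeries σ K) N₃) →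
      ∃ x, y - d₁ x ∈ 𝔪 • (⊤ : Submodule (MvPowerSeries σ K) N₂))
    {z : N₂} (hzc : d₂ z = 0) (j : ℕ) :
    ∃ x, z - d₁ x ∈ 𝔪 ^ j • (⊤ : Submodule (MvPowerSeries σ K) N₂) := by
  induction j with
  | zero => exact ⟨0, by simp⟩
  | succ j ih =>
    obtain ⟨x, hx⟩ := ih
    obtain ⟨x', hx'⟩ := exists_sub_mem_maximalIdeal_pow_succ d₁ d₂ hred hx
      (by rw [map_sub, hzc, hdd, sub_zero])
    exact ⟨x + x', by rwa [map_add, ← sub_sub]⟩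

end Reduction

theorem LinearMap.mem_range_of_forall_exists_sub_mem_pow_smul_top {R A N₁ N₂ : Type*}
    [CommRing R] [Ring A] [Algebra R A] [AddCommGroup N₁] [Module A N₁] [AddCommGroup N₂]
    [Module R N₂] [Module A N₂] [IsScalarTower R A N₂] (d : N₁ →ₗ[A] N₂) (I : Ideal R)
    (hsep : ⨅ j : ℕ, I ^ j • (⊤ : Submodule R (N₂ ⧸ LinearMap.range d)) = ⊥) {z : N₂}
    (hz : ∀ j : ℕ, ∃ x, z - d x ∈ I ^ j • (⊤ : Submodule R N₂)) : z ∈ LinearMap.range d := by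
  rw [← Submodule.Quotient.mk_eq_zero, ← Submodule.mem_bot R, ← hsep, Submodule.mem_iInf]
  intro j
  obtain ⟨x, hx⟩ := hz j
  have : Submodule.Quotient.mk z = (range d).mkQ.restrictScalars R (z - d x) := by
    simp [(Submodule.Quotient.mk_eq_zero _).2 (mem_range_self d x)]
  rw [this]
  exact Submodule.smul_top_le_comap_smul_top _ _ hx

theorem stmt4_general (k : ℕ) (A : Type*) [Ring A] [Algebra (MvPowerSeries (Fin k) ℂ) A]
    -- every object of the category is 𝔪-adically separated:
    (hsep : ∀ (N : Type) [AddCommGroup N] [Module (MvPowerSeries (Fin k) ℂ) N]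
      [Module A N] [IsScalarTower (MvPowerSeries (Fin k) ℂ) A N], Module.Finite A N →
      (⨅ n : ℕ, (IsLocalRing.maximalIdeal (MvPowerSeries (Fin k) ℂ) ^ n) •
        (⊤ : Submodule (MvPowerSeries (Fin k) ℂ) N)) = ⊥)
    -- a bounded-above complex of objects of `Cat_𝕜`, with `𝕜`-flat terms:
    (M : ℤ → Type) [∀ i, AddCommGroup (M i)]
    [∀ i, Module (MvPowerSeries (Fin k) ℂ) (M i)] [∀ i, Module A (M i)]
    [∀ i, IsScalarTower (MvPowerSeries (Fin k) ℂ) A (M i)]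
    (hfg : ∀ i, Module.Finite A (M i))
    (hflat : ∀ i, Module.Flat (MvPowerSeries (Fin k) ℂ) (M i))
    (d : ∀ i : ℤ, M i →ₗ[A] M (i + 1))
    (hdd : ∀ i : ℤ, ∀ x : M i, d (i + 1) (d i x) = 0) :
    -- `M ∈ D^b(Cat_𝕜)` ...
    (∃ n : ℤ, ∀ i : ℤ, i ≤ n → ∀ y : M (i + 1), d (i + 1) y = 0 → ∃ x : M i, d i x = y)
    ↔
    -- ... iff `ℂ ⊗^L_𝕜 M ∈ D^b(Cat)`:
    (∃ n : ℤ, ∀ i : ℤ, i ≤ n → ∀ y : M (i + 1),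
      d (i + 1) y ∈ (IsLocalRing.maximalIdeal (MvPowerSeries (Fin k) ℂ)) •
        (⊤ : Submodule (MvPowerSeries (Fin k) ℂ) (M (i + 1 + 1))) →
      ∃ x : M i, y - d i x ∈ (IsLocalRing.maximalIdeal (MvPowerSeries (Fin k) ℂ)) •
        (⊤ : Submodule (MvPowerSeries (Fin k) ℂ) (M (i + 1)))) := by
  let δ i : M i →ₗ[MvPowerSeries (Fin k) ℂ] M (i + 1) := (d i).restrictScalars _
  constructor
  · rintro ⟨n, hn⟩
    have h := ExactModBelow.varIdeal (d := δ) hdd (exactModBelow_bot_iff.2 hn) Finset.univ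
    rw [MvPowerSeries.varIdeal_univ] at h
    exact ⟨_, h⟩
  · rintro ⟨n, hn⟩
    refine ⟨n, fun i hi y hy => ?_⟩
    have := hfg (i + 1)
    exact (d i).mem_range_of_forall_exists_sub_mem_pow_smul_top _ (hsep _ inferInstance)
      (exists_sub_mem_maximalIdeal_pow (δ i) (δ (i + 1)) (hdd i) (hn i hi) hy)

/-- Let `𝕜 = ℂ[[x₁,…,x_k]]` (formal power series, a complete local ring
with maximal ideal `𝔪`) and let `Cat_𝕜` be a `𝕜`-linear abelian category in which every
object is `𝔪`-adically separated.  Then for `M ∈ D⁻(Cat_𝕜)`, one has `M ∈ D^b(Cat_𝕜)`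
iff `ℂ ⊗^L_𝕜 M ∈ D^b(Cat)`, where `Cat` is the subcategory of objects killed by `𝔪`.

Formalization: `Cat_𝕜` is realized as the category of finitely generated modules over a
`𝕜`-algebra `A` (every such Noetherian `𝕜`-linear category is of this form); the
separatedness hypothesis says `⋂ₙ 𝔪ⁿ N = 0` for each object `N`.  An object of
`D⁻(Cat_𝕜)` is represented by a bounded-above complex `(M_i, d_i)` of objects that are
flat over `𝕜` (so that `ℂ ⊗^L_𝕜 M` is computed by the termwise reduction `M/𝔪M`).
`M ∈ D^b` means its homology is bounded below (exactness in all low degrees),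
and `ℂ ⊗^L_𝕜 M ∈ D^b` likewise for the reduced complex: exactness of `M/𝔪M` at spot
`i+1` says that any `y` with `d y ∈ 𝔪·M` is `d x + 𝔪·M` for some `x` (the other
inclusion being automatic from `d ∘ d = 0`). -/
theorem stmt4 (k : ℕ) (A : Type*) [Ring A] [Algebra (MvPowerSeries (Fin k) ℂ) A]
    -- every object of the category is 𝔪-adically separated:
    (hsep : ∀ (N : Type) [AddCommGroup N] [Module (MvPowerSeries (Fin k) ℂ) N]
      [Module A N] [IsScalarTower (MvPowerSeries (Fin k) ℂ) A N], Module.Finite A N →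
      (⨅ n : ℕ, (IsLocalRing.maximalIdeal (MvPowerSeries (Fin k) ℂ) ^ n) •
        (⊤ : Submodule (MvPowerSeries (Fin k) ℂ) N)) = ⊥)
    -- a bounded-above complex of objects of `Cat_𝕜`, with `𝕜`-flat terms:
    (M : ℤ → Type) [∀ i, AddCommGroup (M i)]
    [∀ i, Module (MvPowerSeries (Fin k) ℂ) (M i)] [∀ i, Module A (M i)]
    [∀ i, IsScalarTower (MvPowerSeries (Fin k) ℂ) A (M i)]
    (hfg : ∀ i, Module.Finite A (M i))
    (hflat : ∀ i, Module.Flat (MvPowerSeries (Fin k) ℂ) (M i))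
    (d : ∀ i : ℤ, M i →ₗ[A] M (i + 1))
    (hdd : ∀ i : ℤ, ∀ x : M i, d (i + 1) (d i x) = 0)
    (hbdd : ∃ n : ℤ, ∀ i : ℤ, n ≤ i → ∀ x : M i, x = 0) :
    -- `M ∈ D^b(Cat_𝕜)` ...
    (∃ n : ℤ, ∀ i : ℤ, i ≤ n → ∀ y : M (i + 1), d (i + 1) y = 0 → ∃ x : M i, d i x = y)
    ↔
    -- ... iff `ℂ ⊗^L_𝕜 M ∈ D^b(Cat)`:
    (∃ n : ℤ, ∀ i : ℤ, i ≤ n → ∀ y : M (i + 1),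
      d (i + 1) y ∈ (IsLocalRing.maximalIdeal (MvPowerSeries (Fin k) ℂ)) •
        (⊤ : Submodule (MvPowerSeries (Fin k) ℂ) (M (i + 1 + 1))) →
      ∃ x : M i, y - d i x ∈ (IsLocalRing.maximalIdeal (MvPowerSeries (Fin k) ℂ)) •
        (⊤ : Submodule (MvPowerSeries (Fin k) ℂ) (M (i + 1)))) :=
  stmt4_general k A hsep M hfg hflat d hdd
end

section
/- With the stabilized length $\ell^{st}(w t_\lambda) = \ell(w) - 2\langle \rho^\vee, \lambda \rangle$ on $W^a$, define $x \leqslant^{st} y$ if there exist roots $\beta_1, \ldots, \beta_k$ of the affine root system with $x = s_{\beta_1} \cdots s_{\beta_k} y$ and $\ell^{st}(s_{\beta_i} \cdots s_{\beta_k} y) < \ell^{st}(s_{\beta_{i+1}} \cdots s_{\beta_k} y)$ for all $i$. Then $\leqslant^{st}$ is a partial order on $W^a$, and for every $\mu \in \Lambda_0$ the map $x \mapsto x t_\mu$ is an automorphism of the poset $(W^a, \leqslant^{st})$. -/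
/-! Right translation by `t_μ` commutes with left multiplication by reflections and lowers
`ℓ^{st}` by the constant `2⟨ρ^∨, μ⟩`, so it maps descent steps to descent steps; translating
back by `t_{-μ}` gives the converse. Antisymmetry holds because every step strictly
decreases the integer-valued `ℓ^{st}`. -/

namespace Relation

variable {α β : Type*} {r : α → α → Prop}

theorem antisymm_reflTransGen_of_lt [Preorder β] (f : α → β) (h : ∀ a b, r a b → f a < f b) :
    AntiSymmetric (ReflTransGen r) := by
  intro a b hab hba
  rw [reflTransGen_iff_eq_or_transGen] at hab hba
  rcases hab with rfl | hab
  · rfl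
  rcases hba with rfl | hba
  · rfl
  have hlt : ∀ {x y}, TransGen r x y → f x < f y := fun hxy => by
    simpa only [transGen_eq_self] using hxy.lift f h
  exact absurd ((hlt hab).trans (hlt hba)) (lt_irrefl _)

theorem reflTransGen_map_iff_of_leftInverse {f g : α → α} (hgf : Function.LeftInverse g f)
    (hf : ∀ a b, r a b → r (f a) (f b)) (hg : ∀ a b, r a b → r (g a) (g b)) {a b : α} :
    ReflTransGen r (f a) (f b) ↔ ReflTransGen r a b :=
  ⟨fun h => by simpa only [Function.onFun, hgf _] using h.lift g hg, fun h => h.lift f hf⟩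

end Relation

namespace AffineWeyl

variable {W Λ : Type*} [Group W] [AddCommGroup Λ] [DistribMulAction W Λ]

def mul (p q : W × Λ) : W × Λ := (p.1 * q.1, q.1⁻¹ • p.2 + q.2)

theorem mul_assoc (p q r : W × Λ) : mul (mul p q) r = mul p (mul q r) := by
  simp only [mul, _root_.mul_assoc, mul_inv_rev, mul_smul, smul_add, add_assoc]

theorem mul_translation_neg (x : W × Λ) (μ : Λ) : mul (mul x (1, μ)) (1, -μ) = x := by
  simp [mul]

def stLength (lenW : W → ℕ) (rhov : Λ →+ ℤ) (p : W × Λ) : ℤ := (lenW p.1 : ℤ) - 2 * rhov p.2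

theorem stLength_mul_translation (lenW : W → ℕ) (rhov : Λ →+ ℤ) (x : W × Λ) (μ : Λ) :
    stLength lenW rhov (mul x (1, μ)) = stLength lenW rhov x - 2 * rhov μ := by
  simp only [stLength, mul, mul_one, inv_one, one_smul, map_add]
  ring

def StDescent (R : Set (W × Λ)) (lenW : W → ℕ) (rhov : Λ →+ ℤ) (x y : W × Λ) : Prop :=
  (∃ r ∈ R, x = mul r y) ∧ stLength lenW rhov x < stLength lenW rhov y

theorem StDescent.mul_translation {R : Set (W × Λ)} {lenW : W → ℕ} {rhov : Λ →+ ℤ}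
    {x y : W × Λ} (h : StDescent R lenW rhov x y) (μ : Λ) :
    StDescent R lenW rhov (mul x (1, μ)) (mul y (1, μ)) := by
  obtain ⟨⟨r, hr, rfl⟩, hlt⟩ := h
  refine ⟨⟨r, hr, mul_assoc r y (1, μ)⟩, ?_⟩
  simp only [stLength_mul_translation]
  omega

end AffineWeyl

open AffineWeyl Relation in
/-- Model the affine Weyl group `W^a = W ⋉ Λ₀` by pairs `(w, λ)` with
multiplication `(w, λ) * (v, μ) = (wv, v⁻¹λ + μ)` (so `w t_λ · v t_μ = wv t_{v⁻¹λ + μ}`);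
`t_μ = (1, μ)`.  The reflections of `W^a` are the elements `s_α t_{kα}` for `α ∈ Φ`
(the positive finite roots) and `k ∈ ℤ`.  With the stabilized length
`ℓ^{st}(w t_λ) = ℓ(w) - 2⟨ρ^∨, λ⟩`, define `x ≤st y` iff there is a chain of roots
`β₁, …, β_r` with `x = s_{β₁} ⋯ s_{β_r} y` and each left multiplication by a reflection
strictly decreasing `ℓ^{st}`.  Then `≤st` is a partial order on `W^a`, and for every
`μ ∈ Λ₀` the map `x ↦ x t_μ` is an automorphism of the poset `(W^a, ≤st)`. -/
theorem stmt6 {W Λ : Type*} [Group W] [AddCommGroup Λ] [DistribMulAction W Λ]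
    (Φ : Finset Λ) (s : Λ → W) (lenW : W → ℕ) (rhov : Λ →+ ℤ) :
    -- multiplication in `W^a = W ⋉ Λ₀`
    let wamul : W × Λ → W × Λ → W × Λ := fun p q => (p.1 * q.1, q.1⁻¹ • p.2 + q.2)
    -- stabilized length `ℓ^{st}(w t_λ) = ℓ(w) - 2⟨ρ^∨, λ⟩`
    let ℓst : W × Λ → ℤ := fun p => (lenW p.1 : ℤ) - 2 * rhov p.2
    -- the reflections `s_α t_{kα}` of `W^a`
    let Refl : Set (W × Λ) := {x | ∃ α ∈ Φ, ∃ k : ℤ, x = (s α, k • α)}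
    -- one step: left multiplication by a reflection strictly decreasing `ℓ^{st}`
    let step : W × Λ → W × Λ → Prop :=
      fun x y => (∃ r ∈ Refl, x = wamul r y) ∧ ℓst x < ℓst y
    -- `x ≤st y`
    let lest : W × Λ → W × Λ → Prop := Relation.ReflTransGen step
    -- `≤st` is a partial order ...
    (Reflexive lest ∧ Transitive lest ∧ AntiSymmetric lest) ∧
    -- ... and each right translation `x ↦ x t_μ` is a poset automorphism.
    (∀ μ : Λ, ∀ x y : W × Λ,
      lest x y ↔ lest (wamul x (1, μ)) (wamul y (1, μ))) := by
  intro wamul ℓst Refl step lest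
  have hstep : step = StDescent Refl lenW rhov := rfl
  refine ⟨⟨fun _ => .refl, fun _ _ _ => .trans,
    antisymm_reflTransGen_of_lt (stLength lenW rhov) fun _ _ h => h.2⟩, fun μ x y => ?_⟩
  simp only [lest, hstep]
  exact (reflTransGen_map_iff_of_leftInverse (f := (mul · (1, μ))) (g := (mul · (1, -μ)))
    (mul_translation_neg · μ) (fun _ _ h => h.mul_translation μ)
    (fun _ _ h => h.mul_translation (-μ))).symm
end

section
/- Let $p > h$ (the Coxeter number) and consider the action of $W^a = W \ltimes \Lambda_0$ on the weight lattice $\Lambda$ by $w \cdot \mu = w(\mu + \rho) - \rho$ and $t_\lambda \cdot \mu = \mu + p\lambda$. If $x \leqslant^{st} y$ in the stabilized order on $W^a$, then $x^{-1} \cdot (-2\rho) \leqslant y^{-1} \cdot (-2\rho)$ in the dominance order on $\Lambda$. -/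
set_option maxRecDepth 8000
set_option maxHeartbeats 1000000


/-- Let `p > h` (the Coxeter number) and consider the action of
`W^a = W ⋉ Λ₀` (modelled by pairs `(w, λ)` with `(w,λ)*(v,μ) = (wv, v⁻¹λ+μ)`) on the
weight lattice `Λ` by `w · μ = w(μ+ρ) - ρ` and `t_λ · μ = μ + pλ`; thus
`(w, λ) · μ = w(μ + pλ + ρ) - ρ` and `(w,λ)⁻¹ = (w⁻¹, -(wλ))`.  Data from the root
system: `Φ` the positive roots, `cpair α μ = ⟨μ, α^∨⟩` (with `⟨α, α^∨⟩ = 2` and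
`1 ≤ ⟨ρ, α^∨⟩ ≤ h - 1` for `α ∈ Φ`), `s α` the reflection, `rhov = ⟨ρ^∨, ·⟩` (so a root
`β` is positive iff `1 ≤ ⟨ρ^∨, β⟩`, negative iff `⟨ρ^∨, β⟩ ≤ -1`), `lenW` the length on
`W` (with `ℓ(s_α w) > ℓ(w)` iff `w⁻¹α > 0`, `ℓ(s_α w) < ℓ(w)` iff `w⁻¹α < 0`, and
`|ℓ(s_α w) - ℓ(w)| ≤ 2|⟨ρ^∨, w⁻¹α⟩| - 1`).  The stabilized order `≤st` on `W^a` is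
generated by: `s_β y <st y` whenever `β = α + kδ` is an affine root (reflection
`s_β = (s_α, kα)`) with `ℓ^{st}(s_β y) < ℓ^{st}(y)`, where
`ℓ^{st}(w t_λ) = ℓ(w) - 2⟨ρ^∨, λ⟩`.  Conclusion: if `x ≤st y`, then
`x⁻¹ · (-2ρ) ≤ y⁻¹ · (-2ρ)` in the dominance order (differences being sums of positive
roots). -/
theorem stmt8 {W Λ : Type*} [Group W] [AddCommGroup Λ] [DistribMulAction W Λ]
    (Φ : Finset Λ) (ρ : Λ) (cpair : Λ → Λ →+ ℤ) (s : Λ → W)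
    (lenW : W → ℕ) (rhov : Λ →+ ℤ) (p h : ℤ)
    (hs : ∀ α ∈ Φ, ∀ μ : Λ, s α • μ = μ - cpair α μ • α)
    (hαα : ∀ α ∈ Φ, cpair α α = 2)
    (hroot : ∀ α ∈ Φ, ∀ w : W,
      (w • α ∈ Φ ∧ 1 ≤ rhov (w • α)) ∨ (-(w • α) ∈ Φ ∧ rhov (w • α) ≤ -1))
    (hlen : ∀ α ∈ Φ, ∀ w : W,
      ((lenW w : ℤ) < lenW (s α * w) ↔ 1 ≤ rhov (w⁻¹ • α)) ∧
      ((lenW (s α * w) : ℤ) < lenW w ↔ rhov (w⁻¹ • α) ≤ -1) ∧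
      |(lenW (s α * w) : ℤ) - lenW w| ≤ 2 * |rhov (w⁻¹ • α)| - 1)
    (hρ : ∀ α ∈ Φ, 1 ≤ cpair α ρ ∧ cpair α ρ ≤ h - 1)
    (hp : h < p) :
    -- multiplication and inversion in `W^a = W ⋉ Λ₀`
    let wamul : W × Λ → W × Λ → W × Λ := fun q q' => (q.1 * q'.1, q'.1⁻¹ • q.2 + q'.2)
    let wainv : W × Λ → W × Λ := fun q => (q.1⁻¹, -(q.1 • q.2))
    -- the stabilized length and order
    let ℓst : W × Λ → ℤ := fun q => (lenW q.1 : ℤ) - 2 * rhov q.2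
    let Refl : Set (W × Λ) := {x | ∃ α ∈ Φ, ∃ k : ℤ, x = (s α, k • α)}
    let lest : W × Λ → W × Λ → Prop := Relation.ReflTransGen
      (fun x y => (∃ r ∈ Refl, x = wamul r y) ∧ ℓst x < ℓst y)
    -- the dot action of `W^a` on `Λ`: `(w, λ) · μ = w(μ + pλ + ρ) - ρ`
    let dot : W × Λ → Λ → Λ := fun q μ => q.1 • (μ + p • q.2 + ρ) - ρ
    ∀ x y : W × Λ, lest x y →
      -- `x⁻¹ · (-2ρ) ≤ y⁻¹ · (-2ρ)` in the dominance order
      dot (wainv y) (-(2 • ρ)) - dot (wainv x) (-(2 • ρ)) ∈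
        AddSubmonoid.closure (Φ : Set Λ) := by
  intro wamul wainv ℓst Refl lest dot x y hxy
  replace hxy : Relation.ReflTransGen
      (fun a b => (∃ r ∈ Refl, a = wamul r b) ∧ ℓst a < ℓst b) x y := hxy
  have hcomm : ∀ (w : W) (n : ℤ) (v : Λ), w • (n • v) = n • (w • v) := fun w n v =>
    map_zsmul (DistribMulAction.toAddMonoidHom Λ w) n v
  have hinvol : ∀ α ∈ Φ, ∀ ν : Λ, s α • (s α • ν) = ν := by
    intro α hα ν
    rw [hs α hα, hs α hα, map_sub, map_zsmul, hαα α hα, smul_eq_mul]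
    have hc : cpair α ν - cpair α ν * 2 = -(cpair α ν) := by ring
    rw [hc, neg_smul, sub_neg_eq_add]
    abel
  have hsinv : ∀ α ∈ Φ, ∀ μ : Λ, (s α)⁻¹ • μ = s α • μ := by
    intro α hα μ
    calc (s α)⁻¹ • μ = (s α)⁻¹ • (s α • (s α • μ)) := by rw [hinvol α hα]
      _ = s α • μ := inv_smul_smul _ _
  have hF : ∀ q : W × Λ, dot (wainv q) (-(2 • ρ)) = (q.1⁻¹ • (-ρ) - p • q.2) - ρ := by
    intro q
    show q.1⁻¹ • (-(2 • ρ) + p • (-(q.1 • q.2)) + ρ) - ρ = (q.1⁻¹ • (-ρ) - p • q.2) - ρ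
    have h1 : -(2 • ρ) + p • (-(q.1 • q.2)) + ρ = -ρ + -(p • (q.1 • q.2)) := by
      rw [smul_neg]; abel
    rw [h1]
    simp only [smul_add, smul_neg, hcomm, inv_smul_smul]
    abel
  have key : ∀ a b : W × Λ, ((∃ r ∈ Refl, a = wamul r b) ∧ ℓst a < ℓst b) →
      (b.1⁻¹ • (-ρ) - p • b.2) - (a.1⁻¹ • (-ρ) - p • a.2) ∈
        AddSubmonoid.closure (Φ : Set Λ) := by
    rintro a b ⟨⟨r, hr, ha⟩, hlt⟩
    obtain ⟨α, hα, k, rfl⟩ := hr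
    have ha' : a = (s α * b.1, b.1⁻¹ • (k • α) + b.2) := ha
    subst ha'
    have hlt' : (lenW (s α * b.1) : ℤ) - 2 * rhov (b.1⁻¹ • (k • α) + b.2) <
        (lenW b.1 : ℤ) - 2 * rhov b.2 := hlt
    rw [map_add, hcomm, map_zsmul, smul_eq_mul] at hlt'
    set β := b.1⁻¹ • α with hβ
    have hc1 := (hρ α hα).1
    have hc2 := (hρ α hα).2
    obtain ⟨hL1, hL2, hL3⟩ := hlen α hα b.1
    have e1 : ((s α * b.1)⁻¹ : W) • (-ρ) = b.1⁻¹ • (-ρ) + cpair α ρ • β := by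
      rw [mul_inv_rev, mul_smul, hsinv α hα, hs α hα, map_neg, neg_smul,
        sub_neg_eq_add, smul_add, hcomm]
    have e2 : p • (b.1⁻¹ • (k • α) + b.2) = (p * k) • β + p • b.2 := by
      rw [hcomm, smul_add, ← mul_zsmul]
    have hdiff : (b.1⁻¹ • (-ρ) - p • b.2) -
        ((s α * b.1, b.1⁻¹ • (k • α) + b.2).1⁻¹ • (-ρ) -
          p • (s α * b.1, b.1⁻¹ • (k • α) + b.2).2) = (p * k - cpair α ρ) • β := by
      show (b.1⁻¹ • (-ρ) - p • b.2) -
        ((s α * b.1)⁻¹ • (-ρ) - p • (b.1⁻¹ • (k • α) + b.2)) = (p * k - cpair α ρ) • β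
      rw [e1, e2, sub_zsmul]
      abel
    rw [hdiff]
    rcases hroot α hα b.1⁻¹ with ⟨hβΦ, hβ1⟩ | ⟨hβΦ, hβ1⟩
    · rw [← hβ] at hβΦ hβ1
      have hlen1 : (lenW b.1 : ℤ) < lenW (s α * b.1) := hL1.mpr hβ1
      have hk : 1 ≤ k := by
        by_contra hk'
        push_neg at hk'
        have hk0 : k ≤ 0 := by omega
        nlinarith [mul_le_mul_of_nonneg_right hk0 (show (0:ℤ) ≤ rhov β by linarith)]
      have hn : 0 ≤ p * k - cpair α ρ := by
        nlinarith [mul_le_mul_of_nonneg_left hk (show (0:ℤ) ≤ p by linarith)]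
      rw [← Int.toNat_of_nonneg hn, natCast_zsmul]
      exact nsmul_mem (AddSubmonoid.subset_closure hβΦ) _
    · rw [← hβ] at hβΦ hβ1
      rw [abs_of_nonpos (by linarith : rhov β ≤ 0), abs_le] at hL3
      have hk : k ≤ 0 := by
        by_contra hk'
        push_neg at hk'
        have hk1 : 0 ≤ k - 1 := by omega
        nlinarith [mul_le_mul_of_nonneg_left (show rhov β ≤ 0 by linarith) hk1]
      have hn : 0 ≤ cpair α ρ - p * k := by
        nlinarith [mul_le_mul_of_nonneg_left (show k ≤ 0 from hk) (show (0:ℤ) ≤ p by linarith)]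
      have heq : (p * k - cpair α ρ) • β = (cpair α ρ - p * k) • (-β) := by
        rw [smul_neg, ← neg_smul, neg_sub]
      rw [heq, ← Int.toNat_of_nonneg hn, natCast_zsmul]
      exact nsmul_mem (AddSubmonoid.subset_closure hβΦ) _
  rw [hF, hF, sub_sub_sub_cancel_right]
  induction hxy with
  | refl => rw [sub_self]; exact zero_mem _
  | @tail b c hab hbc ih =>
    have h2 : (c.1⁻¹ • (-ρ) - p • c.2) - (x.1⁻¹ • (-ρ) - p • x.2) =
        ((c.1⁻¹ • (-ρ) - p • c.2) - (b.1⁻¹ • (-ρ) - p • b.2)) +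
        ((b.1⁻¹ • (-ρ) - p • b.2) - (x.1⁻¹ • (-ρ) - p • x.2)) := by abel
    rw [h2]
    exact add_mem (key b c hbc) ih
end
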